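/- The singular virtual braid monoid decomposes as a semidirect product SVB_n = M_v ⋊ VB_n, where M_v is the monoid generated by the set Υ_v = {βτ_iβ^{-1} : β ∈ VB_n, 1 ≤ i ≤ n−1} with relations uv = vu for all u, v ∈ Υ_v such that uv = vu holds in SVB_n, and VB_n acts on M_v by conjugation. Explicitly, the map Φ : SVB_n → M_v ⋊ VB_n sending σ_i ↦ (1, σ_i), ρ_i ↦ (1, ρ_i), τ_i ↦ (τ_i, 1) is a well-defined monoid isomorphism with inverse (ω, β) ↦ ωβ. -/
import Mathlib


namespace SVBPaper

/-- Generators of the singular virtual braid monoid: `s i` is `σ_i`, `si i` is `σ_i⁻¹`,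
`r i` is `ρ_i`, `t i` is `τ_i`, for `1 ≤ i ≤ n-1` (encoded as `i : Fin (n-1)`). -/
inductive SVBGen (n : ℕ) : Type
  | s  : Fin (n - 1) → SVBGen n
  | si : Fin (n - 1) → SVBGen n
  | r  : Fin (n - 1) → SVBGen n
  | t  : Fin (n - 1) → SVBGen n

/-- The index of a generator. -/
def SVBGen.idx {n : ℕ} : SVBGen n → Fin (n - 1)
  | s i => i
  | si i => i
  | r i => i
  | t i => i

/-- `|i - j| ≥ 2`. -/
def Far {n : ℕ} (i j : Fin (n - 1)) : Prop := (i : ℕ) + 2 ≤ j ∨ (j : ℕ) + 2 ≤ i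

/-- The defining relations of the singular virtual braid monoid `SVB_n`. -/
inductive SVBRel (n : ℕ) : FreeMonoid (SVBGen n) → FreeMonoid (SVBGen n) → Prop
  | comm (x y : SVBGen n) (h : Far x.idx y.idx) :
      SVBRel n (.of x * .of y) (.of y * .of x)
  | inv_right (i : Fin (n - 1)) : SVBRel n (.of (.s i) * .of (.si i)) 1
  | inv_left (i : Fin (n - 1)) : SVBRel n (.of (.si i) * .of (.s i)) 1
  | rho_sq (i : Fin (n - 1)) : SVBRel n (.of (.r i) * .of (.r i)) 1
  | braid_s (i : Fin (n - 1)) (h : (i : ℕ) + 1 < n - 1) :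
      SVBRel n (.of (.s i) * .of (.s ⟨i + 1, h⟩) * .of (.s i))
        (.of (.s ⟨i + 1, h⟩) * .of (.s i) * .of (.s ⟨i + 1, h⟩))
  | braid_r (i : Fin (n - 1)) (h : (i : ℕ) + 1 < n - 1) :
      SVBRel n (.of (.r i) * .of (.r ⟨i + 1, h⟩) * .of (.r i))
        (.of (.r ⟨i + 1, h⟩) * .of (.r i) * .of (.r ⟨i + 1, h⟩))
  | mixed_rs (i : Fin (n - 1)) (h : (i : ℕ) + 1 < n - 1) :
      SVBRel n (.of (.r i) * .of (.s ⟨i + 1, h⟩) * .of (.r i))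
        (.of (.r ⟨i + 1, h⟩) * .of (.s i) * .of (.r ⟨i + 1, h⟩))
  | mixed_rt (i : Fin (n - 1)) (h : (i : ℕ) + 1 < n - 1) :
      SVBRel n (.of (.r i) * .of (.t ⟨i + 1, h⟩) * .of (.r i))
        (.of (.r ⟨i + 1, h⟩) * .of (.t i) * .of (.r ⟨i + 1, h⟩))
  | ts (i : Fin (n - 1)) : SVBRel n (.of (.t i) * .of (.s i)) (.of (.s i) * .of (.t i))
  | sst (i : Fin (n - 1)) (h : (i : ℕ) + 1 < n - 1) :
      SVBRel n (.of (.s i) * .of (.s ⟨i + 1, h⟩) * .of (.t i))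
        (.of (.t ⟨i + 1, h⟩) * .of (.s i) * .of (.s ⟨i + 1, h⟩))

/-- The singular virtual braid monoid on `n` strands. -/
abbrev SVB (n : ℕ) : Type := PresentedMonoid (SVBRel n)

/-- `σ_i` in `SVB_n`. -/
def sσ {n : ℕ} (i : Fin (n - 1)) : SVB n := PresentedMonoid.of (SVBRel n) (.s i)
/-- `σ_i⁻¹` in `SVB_n`. -/
def sσi {n : ℕ} (i : Fin (n - 1)) : SVB n := PresentedMonoid.of (SVBRel n) (.si i)
/-- `ρ_i` in `SVB_n`. -/
def sρ {n : ℕ} (i : Fin (n - 1)) : SVB n := PresentedMonoid.of (SVBRel n) (.r i)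
/-- `τ_i` in `SVB_n`. -/
def sτ {n : ℕ} (i : Fin (n - 1)) : SVB n := PresentedMonoid.of (SVBRel n) (.t i)

/-- The `i`-th strand, as an element of `Fin n`. -/
def stA {n : ℕ} (i : Fin (n - 1)) : Fin n := ⟨i, by have := i.isLt; omega⟩
/-- The `(i+1)`-st strand, as an element of `Fin n`. -/
def stB {n : ℕ} (i : Fin (n - 1)) : Fin n := ⟨(i : ℕ) + 1, by have := i.isLt; omega⟩

/-- The transposition `(i, i+1)` in the symmetric group `S_n`. -/
def swapAdj {n : ℕ} (i : Fin (n - 1)) : Equiv.Perm (Fin n) := Equiv.swap (stA i) (stB i)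


/-- Generators of the virtual braid group: `s i` is `σ_i`, `r i` is `ρ_i`. -/
inductive VBGen (n : ℕ) : Type
  | s : Fin (n - 1) → VBGen n
  | r : Fin (n - 1) → VBGen n

def VBGen.idx {n : ℕ} : VBGen n → Fin (n - 1)
  | s i => i
  | r i => i

/-- The relators of the virtual braid group `VB_n`. -/
inductive VBRel (n : ℕ) : FreeGroup (VBGen n) → Prop
  | comm (x y : VBGen n) (h : Far x.idx y.idx) :
      VBRel n (.of x * .of y * (FreeGroup.of x)⁻¹ * (FreeGroup.of y)⁻¹)
  | rho_sq (i : Fin (n - 1)) : VBRel n (.of (.r i) * .of (.r i))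
  | braid_s (i : Fin (n - 1)) (h : (i : ℕ) + 1 < n - 1) :
      VBRel n (.of (.s i) * .of (.s ⟨i + 1, h⟩) * .of (.s i) *
        (FreeGroup.of (.s ⟨i + 1, h⟩) * FreeGroup.of (.s i) * FreeGroup.of (.s ⟨i + 1, h⟩))⁻¹)
  | braid_r (i : Fin (n - 1)) (h : (i : ℕ) + 1 < n - 1) :
      VBRel n (.of (.r i) * .of (.r ⟨i + 1, h⟩) * .of (.r i) *
        (FreeGroup.of (.r ⟨i + 1, h⟩) * FreeGroup.of (.r i) * FreeGroup.of (.r ⟨i + 1, h⟩))⁻¹)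
  | mixed_rs (i : Fin (n - 1)) (h : (i : ℕ) + 1 < n - 1) :
      VBRel n (.of (.r i) * .of (.s ⟨i + 1, h⟩) * .of (.r i) *
        (FreeGroup.of (.r ⟨i + 1, h⟩) * FreeGroup.of (.s i) * FreeGroup.of (.r ⟨i + 1, h⟩))⁻¹)

/-- The virtual braid group on `n` strands. -/
abbrev VB (n : ℕ) : Type := PresentedGroup {w | VBRel n w}

/-- `σ_i` in `VB_n`. -/
def vσ {n : ℕ} (i : Fin (n - 1)) : VB n := PresentedGroup.of (.s i)
/-- `ρ_i` in `VB_n`. -/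
def vρ {n : ℕ} (i : Fin (n - 1)) : VB n := PresentedGroup.of (.r i)


/-- The set `Υ_v = {β τ_i β⁻¹ : β ∈ VB_n, 1 ≤ i ≤ n-1} ⊆ SVB_n`, where `VB_n` sits inside
the units of `SVB_n` via `ι`. -/
def Upsv {n : ℕ} (ι : VB n →* (SVB n)ˣ) : Set (SVB n) :=
  {x | ∃ (β : VB n) (i : Fin (n - 1)), x = ↑(ι β) * sτ i * ↑(ι β)⁻¹}

/-- The defining relations of `M_v`: two elements of `Υ_v` commute in `M_v` whenever they
commute in `SVB_n`. -/
def MvRel {n : ℕ} (ι : VB n →* (SVB n)ˣ) :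
    FreeMonoid ↥(Upsv ι) → FreeMonoid ↥(Upsv ι) → Prop := fun w₁ w₂ =>
  ∃ u v : ↥(Upsv ι), (u : SVB n) * v = (v : SVB n) * u ∧
    w₁ = .of u * .of v ∧ w₂ = .of v * .of u

/-- The monoid `M_v`, presented by `Υ_v` with the commutation relations holding in `SVB_n`. -/
abbrev Mv {n : ℕ} (ι : VB n →* (SVB n)ˣ) : Type _ := PresentedMonoid (MvRel ι)


section Aux

variable {n : ℕ}

/-! ### Basic relation lemmas in `SVB n` -/

theorem svb_sound {a b : FreeMonoid (SVBGen n)} (h : SVBRel n a b) :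
    PresentedMonoid.mk (SVBRel n) a = PresentedMonoid.mk (SVBRel n) b :=
  Quotient.sound (ConGen.Rel.of a b h)

theorem svb_comm {x y : SVBGen n} (h : Far x.idx y.idx) :
    (PresentedMonoid.of (SVBRel n) x) * .of _ y = .of _ y * .of _ x := by
  have := svb_sound (SVBRel.comm x y h)
  rwa [map_mul, map_mul] at this

theorem sσ_sσi (i : Fin (n - 1)) : sσ i * sσi i = 1 := by
  have := svb_sound (SVBRel.inv_right (n := n) i)
  rwa [map_mul, map_one] at this

theorem sσi_sσ (i : Fin (n - 1)) : sσi i * sσ i = 1 := by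
  have := svb_sound (SVBRel.inv_left (n := n) i)
  rwa [map_mul, map_one] at this

theorem sρ_sρ (i : Fin (n - 1)) : sρ i * sρ i = 1 := by
  have := svb_sound (SVBRel.rho_sq (n := n) i)
  rwa [map_mul, map_one] at this

theorem sτ_sσ (i : Fin (n - 1)) : sτ i * sσ i = sσ i * sτ i := by
  have := svb_sound (SVBRel.ts (n := n) i)
  rwa [map_mul, map_mul] at this

theorem svb_mixed_rt (i : Fin (n - 1)) (h : (i : ℕ) + 1 < n - 1) :
    sρ i * sτ ⟨i + 1, h⟩ * sρ i = sρ ⟨i + 1, h⟩ * sτ i * sρ ⟨i + 1, h⟩ := by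
  have := svb_sound (SVBRel.mixed_rt (n := n) i h)
  rwa [map_mul, map_mul, map_mul, map_mul] at this

theorem svb_sst (i : Fin (n - 1)) (h : (i : ℕ) + 1 < n - 1) :
    sσ i * sσ ⟨i + 1, h⟩ * sτ i = sτ ⟨i + 1, h⟩ * sσ i * sσ ⟨i + 1, h⟩ := by
  have := svb_sound (SVBRel.sst (n := n) i h)
  rwa [map_mul, map_mul, map_mul, map_mul] at this

/-! ### Basic relation lemmas in `VB n` -/

theorem vb_one {w : FreeGroup (VBGen n)} (h : VBRel n w) :
    PresentedGroup.mk {w | VBRel n w} w = 1 :=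
  (QuotientGroup.eq_one_iff _).mpr (Subgroup.subset_normalClosure h)

theorem vb_commute {x y : VBGen n} (h : Far x.idx y.idx) :
    Commute (PresentedGroup.of (rels := {w | VBRel n w}) x) (PresentedGroup.of y) := by
  have h1 := vb_one (VBRel.comm x y h)
  rw [map_mul, map_mul, map_mul, map_inv, map_inv, mul_inv_eq_one,
    mul_inv_eq_iff_eq_mul] at h1
  exact h1

theorem vρ_sq (i : Fin (n - 1)) : vρ (n := n) i * vρ i = 1 := by
  have := vb_one (VBRel.rho_sq (n := n) i)
  rwa [map_mul] at this

theorem vb_braid_s (i : Fin (n - 1)) (h : (i : ℕ) + 1 < n - 1) :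
    vσ i * vσ ⟨i + 1, h⟩ * vσ i = vσ ⟨i + 1, h⟩ * vσ i * vσ ⟨i + 1, h⟩ := by
  have h1 := vb_one (VBRel.braid_s (n := n) i h)
  rwa [map_mul, map_inv, map_mul, map_mul, map_mul, map_mul, mul_inv_eq_one] at h1

theorem vb_braid_r (i : Fin (n - 1)) (h : (i : ℕ) + 1 < n - 1) :
    vρ i * vρ ⟨i + 1, h⟩ * vρ i = vρ ⟨i + 1, h⟩ * vρ i * vρ ⟨i + 1, h⟩ := by
  have h1 := vb_one (VBRel.braid_r (n := n) i h)
  rwa [map_mul, map_inv, map_mul, map_mul, map_mul, map_mul, mul_inv_eq_one] at h1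

theorem vb_mixed_rs (i : Fin (n - 1)) (h : (i : ℕ) + 1 < n - 1) :
    vρ i * vσ ⟨i + 1, h⟩ * vρ i = vρ ⟨i + 1, h⟩ * vσ i * vρ ⟨i + 1, h⟩ := by
  have h1 := vb_one (VBRel.mixed_rs (n := n) i h)
  rwa [map_mul, map_inv, map_mul, map_mul, map_mul, map_mul, mul_inv_eq_one] at h1

end Aux

section Act

variable {n : ℕ} (ι : VB n →* (SVB n)ˣ)

theorem conj_mem : ∀ x ∈ Upsv ι, ∀ β : VB n, ↑(ι β) * x * ↑(ι β)⁻¹ ∈ Upsv ι := by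
  rintro x ⟨γ, i, rfl⟩ β
  refine ⟨β * γ, i, ?_⟩
  simp [map_mul, mul_inv_rev, Units.val_mul, mul_assoc]

/-- Conjugation by `ι β` as a monoid endomorphism of `SVB n`. -/
def conjU (β : VB n) : SVB n →* SVB n where
  toFun x := ↑(ι β) * x * ↑(ι β)⁻¹
  map_one' := by simp
  map_mul' a b := by simp [mul_assoc]

theorem conjU_apply (β : VB n) (x : SVB n) : conjU ι β x = ↑(ι β) * x * ↑(ι β)⁻¹ := rfl

/-- Conjugation action on the generating set `Υ_v`. -/
def actGen (β : VB n) (u : ↥(Upsv ι)) : ↥(Upsv ι) :=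
  ⟨↑(ι β) * ↑u * ↑(ι β)⁻¹, conj_mem ι u u.2 β⟩

theorem actGen_val (β : VB n) (u : ↥(Upsv ι)) :
    (actGen ι β u : SVB n) = ↑(ι β) * ↑u * ↑(ι β)⁻¹ := rfl

theorem mv_of_comm {u v : ↥(Upsv ι)} (h : (u : SVB n) * v = (v : SVB n) * u) :
    (PresentedMonoid.of (MvRel ι) u) * .of _ v = .of _ v * .of _ u :=
  Quotient.sound (ConGen.Rel.of _ _ ⟨u, v, h, rfl, rfl⟩)

/-- The action of `β : VB n` on `M_v`. -/
def act (β : VB n) : Mv ι →* Mv ι :=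
  PresentedMonoid.lift (fun u => PresentedMonoid.of (MvRel ι) (actGen ι β u)) (by
    rintro a b ⟨u, v, huv, rfl, rfl⟩
    simp only [map_mul, FreeMonoid.lift_eval_of]
    refine mv_of_comm ι ?_
    have : conjU ι β (↑u * ↑v) = conjU ι β (↑v * ↑u) := by rw [huv]
    rw [map_mul, map_mul] at this
    exact this)

theorem act_of (β : VB n) (u : ↥(Upsv ι)) :
    act ι β (PresentedMonoid.of (MvRel ι) u) = .of _ (actGen ι β u) := rfl

theorem act_one : ∀ x : Mv ι, act ι 1 x = x := by
  have : act ι 1 = MonoidHom.id (Mv ι) := by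
    refine PresentedMonoid.ext _ fun u => ?_
    rw [MonoidHom.id_apply, act_of]
    congr 1
    refine Subtype.ext ?_
    simp [actGen_val, map_one]
  intro x; rw [this, MonoidHom.id_apply]

theorem act_mul (β β' : VB n) : ∀ x : Mv ι, act ι (β * β') x = act ι β (act ι β' x) := by
  have : act ι (β * β') = (act ι β).comp (act ι β') := by
    refine PresentedMonoid.ext _ fun u => ?_
    rw [MonoidHom.comp_apply, act_of, act_of, act_of]
    congr 1
    refine Subtype.ext ?_
    simp [actGen_val, map_mul, mul_inv_rev, Units.val_mul, mul_assoc]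
  intro x; rw [this, MonoidHom.comp_apply]

/-- The semidirect product `M_v ⋊ VB_n` as a monoid. -/
@[ext]
structure SD (ι : VB n →* (SVB n)ˣ) where
  om : Mv ι
  bt : VB n

instance : Mul (SD ι) := ⟨fun a b => ⟨a.om * act ι a.bt b.om, a.bt * b.bt⟩⟩
instance : One (SD ι) := ⟨⟨1, 1⟩⟩

theorem SD.mul_def (a b : SD ι) : a * b = ⟨a.om * act ι a.bt b.om, a.bt * b.bt⟩ := rfl
theorem SD.one_def : (1 : SD ι) = ⟨1, 1⟩ := rfl

instance : Monoid (SD ι) where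
  mul_assoc a b c := by
    ext <;> simp [SD.mul_def, act_mul, map_mul, mul_assoc]
  one_mul a := by
    ext <;> simp [SD.mul_def, SD.one_def, act_one]
  mul_one a := by
    ext <;> simp [SD.mul_def, SD.one_def, map_one]

theorem SD.mk_mul_mk (m m' : Mv ι) (b b' : VB n) :
    (⟨m, b⟩ : SD ι) * ⟨m', b'⟩ = ⟨m * act ι b m', b * b'⟩ := rfl

theorem SD.vb_mul (b b' : VB n) : (⟨1, b⟩ : SD ι) * ⟨1, b'⟩ = ⟨1, b * b'⟩ := by
  rw [SD.mk_mul_mk, map_one, mul_one]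

theorem SD.vb_mul_mv (b : VB n) (m : Mv ι) : (⟨1, b⟩ : SD ι) * ⟨m, 1⟩ = ⟨act ι b m, b⟩ := by
  rw [SD.mk_mul_mk, one_mul, mul_one]

theorem SD.mul_vb (m : Mv ι) (b b' : VB n) : (⟨m, b⟩ : SD ι) * ⟨1, b'⟩ = ⟨m, b * b'⟩ := by
  rw [SD.mk_mul_mk, map_one, mul_one]

theorem SD.mv_mul_mv (m m' : Mv ι) : (⟨m, 1⟩ : SD ι) * ⟨m', 1⟩ = ⟨m * m', 1⟩ := by
  rw [SD.mk_mul_mk, act_one, mul_one]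

end Act

section Phi

variable {n : ℕ} (ι : VB n →* (SVB n)ˣ)
variable (hι : ∀ i : Fin (n - 1),
      ((ι (vσ i) : (SVB n)ˣ) : SVB n) = sσ i ∧
      (((ι (vσ i))⁻¹ : (SVB n)ˣ) : SVB n) = sσi i ∧
      ((ι (vρ i) : (SVB n)ˣ) : SVB n) = sρ i)

/-- `τ_i` as an element of `Υ_v`. -/
def upsτ (i : Fin (n - 1)) : ↥(Upsv ι) :=
  ⟨sτ i, 1, i, by simp [map_one]⟩

include hι in
theorem hρi (i : Fin (n - 1)) : (((ι (vρ i))⁻¹ : (SVB n)ˣ) : SVB n) = sρ i := by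
  have h2 : ι (vρ i) * ι (vρ i) = 1 := by rw [← map_mul, vρ_sq, map_one]
  rw [inv_eq_of_mul_eq_one_right h2]
  exact (hι i).2.2

include hι in
theorem hσi' (i : Fin (n - 1)) : ((ι ((vσ i)⁻¹) : (SVB n)ˣ) : SVB n) = sσi i := by
  rw [map_inv]; exact (hι i).2.1

include hι in
theorem hσi'' (i : Fin (n - 1)) : (((ι ((vσ i)⁻¹))⁻¹ : (SVB n)ˣ) : SVB n) = sσ i := by
  rw [map_inv, inv_inv]; exact (hι i).1

/-- The `VB n`-component of the image of a generator under `Φ`. -/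
def gvb : SVBGen n → VB n
  | .s i => vσ i
  | .si i => (vσ i)⁻¹
  | .r i => vρ i
  | .t _ => 1

/-- The `M_v`-component of the image of a generator under `Φ`. -/
def mτ : SVBGen n → Mv ι
  | .t i => PresentedMonoid.of (MvRel ι) (upsτ ι i)
  | _ => 1

/-- The image of a generator under `Φ`. -/
def phiGen (x : SVBGen n) : SD ι := ⟨mτ ι x, gvb x⟩

theorem gvb_comm (x y : SVBGen n) (h : Far x.idx y.idx) : Commute (gvb (n := n) x) (gvb y) := by
  cases x with
  | s i =>
    cases y with
    | s j => exact vb_commute (x := .s i) (y := .s j) h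
    | si j => exact (vb_commute (x := .s i) (y := .s j) h).inv_right
    | r j => exact vb_commute (x := .s i) (y := .r j) h
    | t j => exact Commute.one_right _
  | si i =>
    cases y with
    | s j => exact (vb_commute (x := .s i) (y := .s j) h).inv_left
    | si j => exact ((vb_commute (x := .s i) (y := .s j) h).inv_left).inv_right
    | r j => exact (vb_commute (x := .s i) (y := .r j) h).inv_left
    | t j => exact Commute.one_right _
  | r i =>
    cases y with
    | s j => exact vb_commute (x := .r i) (y := .s j) h
    | si j => exact (vb_commute (x := .r i) (y := .s j) h).inv_right
    | r j => exact vb_commute (x := .r i) (y := .r j) h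
    | t j => exact Commute.one_right _
  | t i => exact Commute.one_left _

theorem fix_tau (β : VB n) (i : Fin (n - 1)) (h : ↑(ι β) * sτ i = sτ i * ↑(ι β)) :
    act ι β (PresentedMonoid.of (MvRel ι) (upsτ ι i)) = .of _ (upsτ ι i) := by
  rw [act_of]
  congr 1
  refine Subtype.ext ?_
  show ↑(ι β) * sτ i * ↑(ι β)⁻¹ = sτ i
  rw [h, mul_assoc, Units.mul_inv, mul_one]

theorem conj_sτ (y : SVBGen n) (i : Fin (n - 1)) (h : Far y.idx (SVBGen.t i).idx) :
    (PresentedMonoid.of (SVBRel n) y) * sτ i = sτ i * .of _ y :=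
  svb_comm (x := y) (y := SVBGen.t i) h

include hι in
theorem fix_tau_gen (y : SVBGen n) (i : Fin (n - 1)) (h : Far y.idx (SVBGen.t i).idx) :
    act ι (gvb y) (PresentedMonoid.of (MvRel ι) (upsτ ι i)) = .of _ (upsτ ι i) := by
  cases y with
  | s j =>
      refine fix_tau ι _ _ ?_
      show ↑(ι (vσ j)) * sτ i = sτ i * ↑(ι (vσ j))
      rw [(hι j).1]
      exact conj_sτ (.s j) i h
  | si j =>
      refine fix_tau ι _ _ ?_
      show ↑(ι ((vσ j)⁻¹)) * sτ i = sτ i * ↑(ι ((vσ j)⁻¹))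
      rw [hσi' ι hι j]
      exact conj_sτ (.si j) i h
  | r j =>
      refine fix_tau ι _ _ ?_
      show ↑(ι (vρ j)) * sτ i = sτ i * ↑(ι (vρ j))
      rw [(hι j).2.2]
      exact conj_sτ (.r j) i h
  | t j => exact act_one ι _

theorem far_symm {i j : Fin (n - 1)} (h : Far i j) : Far j i := h.symm

include hι in
theorem mτ_mix (x y : SVBGen n) (h : Far x.idx y.idx) :
    mτ ι x * act ι (gvb x) (mτ ι y) = mτ ι y * act ι (gvb y) (mτ ι x) := by
  cases x with
  | t i =>
      cases y with
      | t j =>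
          simp only [mτ, gvb, act_one]
          refine mv_of_comm ι ?_
          exact svb_comm (x := SVBGen.t i) (y := SVBGen.t j) h
      | s j =>
          simp only [mτ, gvb, map_one, mul_one, one_mul, act_one]
          exact (fix_tau_gen ι hι (SVBGen.s j) i (far_symm h)).symm
      | si j =>
          simp only [mτ, gvb, map_one, mul_one, one_mul, act_one]
          exact (fix_tau_gen ι hι (SVBGen.si j) i (far_symm h)).symm
      | r j =>
          simp only [mτ, gvb, map_one, mul_one, one_mul, act_one]
          exact (fix_tau_gen ι hι (SVBGen.r j) i (far_symm h)).symm
  | s i =>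
      cases y with
      | t j =>
          simp only [mτ, gvb, map_one, mul_one, one_mul, act_one]
          exact fix_tau_gen ι hι (SVBGen.s i) j h
      | s j => simp [mτ, map_one]
      | si j => simp [mτ, map_one]
      | r j => simp [mτ, map_one]
  | si i =>
      cases y with
      | t j =>
          simp only [mτ, gvb, map_one, mul_one, one_mul, act_one]
          exact fix_tau_gen ι hι (SVBGen.si i) j h
      | s j => simp [mτ, map_one]
      | si j => simp [mτ, map_one]
      | r j => simp [mτ, map_one]
  | r i =>
      cases y with
      | t j =>
          simp only [mτ, gvb, map_one, mul_one, one_mul, act_one]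
          exact fix_tau_gen ι hι (SVBGen.r i) j h
      | s j => simp [mτ, map_one]
      | si j => simp [mτ, map_one]
      | r j => simp [mτ, map_one]

end Phi

section PhiDef

variable {n : ℕ} (ι : VB n →* (SVB n)ˣ)
variable (hι : ∀ i : Fin (n - 1),
      ((ι (vσ i) : (SVB n)ˣ) : SVB n) = sσ i ∧
      (((ι (vσ i))⁻¹ : (SVB n)ˣ) : SVB n) = sσi i ∧
      ((ι (vρ i) : (SVB n)ˣ) : SVB n) = sρ i)

include hι in
theorem phi_rel : ∀ a b : FreeMonoid (SVBGen n), SVBRel n a b →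
    FreeMonoid.lift (phiGen ι) a = FreeMonoid.lift (phiGen ι) b := by
  intro a b hrel
  induction hrel with
  | comm x y h =>
      simp only [map_mul, FreeMonoid.lift_eval_of, phiGen]
      rw [SD.mk_mul_mk, SD.mk_mul_mk, mτ_mix ι hι x y h, (gvb_comm x y h).eq]
  | inv_right i =>
      simp only [map_mul, FreeMonoid.lift_eval_of, map_one, phiGen, mτ, gvb]
      rw [SD.vb_mul, mul_inv_cancel]
      exact SD.one_def ι |>.symm
  | inv_left i =>
      simp only [map_mul, FreeMonoid.lift_eval_of, map_one, phiGen, mτ, gvb]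
      rw [SD.vb_mul, inv_mul_cancel]
      exact SD.one_def ι |>.symm
  | rho_sq i =>
      simp only [map_mul, FreeMonoid.lift_eval_of, map_one, phiGen, mτ, gvb]
      rw [SD.vb_mul, vρ_sq]
      exact SD.one_def ι |>.symm
  | braid_s i h =>
      simp only [map_mul, FreeMonoid.lift_eval_of, phiGen, mτ, gvb]
      rw [SD.vb_mul, SD.vb_mul, SD.vb_mul, SD.vb_mul, vb_braid_s i h]
  | braid_r i h =>
      simp only [map_mul, FreeMonoid.lift_eval_of, phiGen, mτ, gvb]
      rw [SD.vb_mul, SD.vb_mul, SD.vb_mul, SD.vb_mul, vb_braid_r i h]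
  | mixed_rs i h =>
      simp only [map_mul, FreeMonoid.lift_eval_of, phiGen, mτ, gvb]
      rw [SD.vb_mul, SD.vb_mul, SD.vb_mul, SD.vb_mul, vb_mixed_rs i h]
  | mixed_rt i h =>
      simp only [map_mul, FreeMonoid.lift_eval_of, phiGen, mτ, gvb]
      rw [SD.vb_mul_mv, SD.mk_mul_mk, SD.vb_mul_mv, SD.mk_mul_mk,
        map_one, mul_one, map_one, mul_one, vρ_sq, vρ_sq]
      congr 1
      rw [act_of, act_of]
      congr 1
      refine Subtype.ext ?_
      show ↑(ι (vρ i)) * sτ ⟨i + 1, h⟩ * ↑(ι (vρ i))⁻¹ =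
        ↑(ι (vρ ⟨i + 1, h⟩)) * sτ i * ↑(ι (vρ ⟨i + 1, h⟩))⁻¹
      rw [(hι i).2.2, (hι ⟨i + 1, h⟩).2.2, hρi ι hι i, hρi ι hι ⟨i + 1, h⟩]
      exact svb_mixed_rt i h
  | ts i =>
      simp only [map_mul, FreeMonoid.lift_eval_of, phiGen, mτ, gvb]
      rw [SD.mul_vb, SD.vb_mul_mv, one_mul]
      congr 1
      refine (fix_tau ι _ _ ?_).symm
      show ↑(ι (vσ i)) * sτ i = sτ i * ↑(ι (vσ i))
      rw [(hι i).1]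
      exact (sτ_sσ i).symm
  | sst i h =>
      simp only [map_mul, FreeMonoid.lift_eval_of, phiGen, mτ, gvb]
      rw [SD.vb_mul, SD.vb_mul_mv, SD.mul_vb, SD.mul_vb, one_mul]
      congr 1
      rw [act_of]
      congr 1
      refine Subtype.ext ?_
      show ↑(ι (vσ i * vσ ⟨i + 1, h⟩)) * sτ i * ↑(ι (vσ i * vσ ⟨i + 1, h⟩))⁻¹ = sτ ⟨i + 1, h⟩
      rw [map_mul, mul_inv_rev, Units.val_mul, Units.val_mul, (hι i).1, (hι ⟨i + 1, h⟩).1,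
        (hι i).2.1, (hι ⟨i + 1, h⟩).2.1]
      calc sσ i * sσ ⟨i + 1, h⟩ * sτ i * (sσi ⟨i + 1, h⟩ * sσi i)
          = sτ ⟨i + 1, h⟩ * sσ i * ((sσ ⟨i + 1, h⟩ * sσi ⟨i + 1, h⟩) * sσi i) := by
            rw [svb_sst i h]; simp [mul_assoc]
        _ = sτ ⟨i + 1, h⟩ := by rw [sσ_sσi, one_mul, mul_assoc, sσ_sσi, mul_one]

/-- The homomorphism `Φ : SVB_n → M_v ⋊ VB_n`. -/
def Phi : SVB n →* SD ι := PresentedMonoid.lift (phiGen ι) (phi_rel ι hι)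

theorem Phi_sσ (i : Fin (n - 1)) : Phi ι hι (sσ i) = ⟨1, vσ i⟩ := rfl
theorem Phi_sσi (i : Fin (n - 1)) : Phi ι hι (sσi i) = ⟨1, (vσ i)⁻¹⟩ := rfl
theorem Phi_sρ (i : Fin (n - 1)) : Phi ι hι (sρ i) = ⟨1, vρ i⟩ := rfl
theorem Phi_sτ (i : Fin (n - 1)) :
    Phi ι hι (sτ i) = ⟨PresentedMonoid.of (MvRel ι) (upsτ ι i), 1⟩ := rfl

theorem Phi_iota (β : VB n) : Phi ι hι ↑(ι β) = ⟨1, β⟩ := by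
  let H : Subgroup (VB n) :=
    { carrier := {β | Phi ι hι ↑(ι β) = ⟨1, β⟩}
      one_mem' := by
        show Phi ι hι ↑(ι 1) = ⟨1, 1⟩
        rw [map_one, Units.val_one, map_one]
        exact SD.one_def ι
      mul_mem' := by
        intro a b ha hb
        show Phi ι hι ↑(ι (a * b)) = ⟨1, a * b⟩
        rw [map_mul, Units.val_mul, map_mul, ha, hb, SD.vb_mul]
      inv_mem' := by
        intro a ha
        show Phi ι hι ↑(ι a⁻¹) = ⟨1, a⁻¹⟩
        have h1 : (⟨1, a⁻¹⟩ : SD ι) * Phi ι hι ↑(ι a) = 1 := by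
          rw [ha, SD.vb_mul, inv_mul_cancel]; exact (SD.one_def ι).symm
        have h2 : Phi ι hι ↑(ι a) * Phi ι hι ↑(ι a⁻¹) = 1 := by
          rw [← map_mul, ← Units.val_mul, ← map_mul, mul_inv_cancel, map_one, Units.val_one,
            map_one]
        exact (left_inv_eq_right_inv h1 h2).symm }
  have : ∀ β, β ∈ H := by
    intro β
    refine PresentedGroup.generated_by _ H ?_ β
    intro j
    cases j with
    | s i =>
        show Phi ι hι ↑(ι (vσ i)) = ⟨1, vσ i⟩
        rw [(hι i).1]; exact Phi_sσ ι hι i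
    | r i =>
        show Phi ι hι ↑(ι (vρ i)) = ⟨1, vρ i⟩
        rw [(hι i).2.2]; exact Phi_sρ ι hι i
  exact this β

end PhiDef

section Final

variable {n : ℕ} (ι : VB n →* (SVB n)ˣ)
variable (hι : ∀ i : Fin (n - 1),
      ((ι (vσ i) : (SVB n)ˣ) : SVB n) = sσ i ∧
      (((ι (vσ i))⁻¹ : (SVB n)ˣ) : SVB n) = sσi i ∧
      ((ι (vρ i) : (SVB n)ˣ) : SVB n) = sρ i)
variable (π : Mv ι →* SVB n)
variable (hπ : ∀ u : ↥(Upsv ι), π (PresentedMonoid.of (MvRel ι) u) = (u : SVB n))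

/-- The inclusion `M_v → M_v ⋊ VB_n` as a monoid homomorphism. -/
def inclMv : Mv ι →* SD ι where
  toFun ω := ⟨ω, 1⟩
  map_one' := (SD.one_def ι).symm
  map_mul' a b := (SD.mv_mul_mv ι a b).symm

include hπ in
theorem Phi_pi (ω : Mv ι) : Phi ι hι (π ω) = ⟨ω, 1⟩ := by
  have key : (Phi ι hι).comp π = inclMv ι := by
    refine PresentedMonoid.ext _ fun u => ?_
    obtain ⟨β, i, hx⟩ := u.2
    show Phi ι hι (π (PresentedMonoid.of (MvRel ι) u)) = ⟨PresentedMonoid.of (MvRel ι) u, 1⟩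
    rw [hπ u, hx, map_mul, map_mul, Phi_sτ, Phi_iota ι hι β]
    have hinv : Phi ι hι ↑(ι β)⁻¹ = ⟨1, β⁻¹⟩ := by
      rw [← map_inv ι β]; exact Phi_iota ι hι β⁻¹
    rw [hinv, SD.vb_mul_mv, SD.mul_vb, mul_inv_cancel, act_of]
    congr 1
    refine congrArg _ (Subtype.ext ?_)
    exact (show (actGen ι β (upsτ ι i) : SVB n) = ↑(ι β) * sτ i * ↑(ι β)⁻¹ from rfl).trans
      hx.symm
  exact congrFun (congrArg (fun f => f.toFun) key) ω

include hπ in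
theorem pi_act (β : VB n) (ω : Mv ι) : π (act ι β ω) = ↑(ι β) * π ω * ↑(ι β)⁻¹ := by
  have key : π.comp (act ι β) = (conjU ι β).comp π := by
    refine PresentedMonoid.ext _ fun u => ?_
    show π (act ι β (PresentedMonoid.of (MvRel ι) u)) = conjU ι β (π (PresentedMonoid.of _ u))
    rw [act_of, hπ, hπ, conjU_apply]
    rfl
  exact congrFun (congrArg (fun f => f.toFun) key) ω

include hπ in
theorem prod_eq (ω ω' : Mv ι) (β β' : VB n) :
    (π ω * ↑(ι β)) * (π ω' * ↑(ι β')) = π (ω * act ι β ω') * ↑(ι (β * β')) := by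
  rw [map_mul π, pi_act ι π hπ, map_mul ι, Units.val_mul]
  simp [mul_assoc]

include hπ in
theorem Phi_prod (ω : Mv ι) (β : VB n) : Phi ι hι (π ω * ↑(ι β)) = ⟨ω, β⟩ := by
  rw [map_mul, Phi_pi ι hι π hπ, Phi_iota ι hι, SD.mul_vb, one_mul]

end Final


/-- `SVB_n = M_v ⋊ VB_n`: the set `Υ_v` is stable under conjugation by
`VB_n` (giving the action of `VB_n` on `M_v`), the multiplication map
`M_v × VB_n → SVB_n, (ω, β) ↦ ωβ` (inverse of `Φ`) is bijective, and multiplication on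
`SVB_n` corresponds to the semidirect product multiplication
`(ω, β)(ω', β') = (ω (β·ω'), ββ')`. -/
theorem semidirect_decomposition (n : ℕ) (hn : 2 ≤ n)
    (ι : VB n →* (SVB n)ˣ)
    (hι : ∀ i : Fin (n - 1),
      ((ι (vσ i) : (SVB n)ˣ) : SVB n) = sσ i ∧
      (((ι (vσ i))⁻¹ : (SVB n)ˣ) : SVB n) = sσi i ∧
      ((ι (vρ i) : (SVB n)ˣ) : SVB n) = sρ i)
    (π : Mv ι →* SVB n)
    (hπ : ∀ u : ↥(Upsv ι), π (PresentedMonoid.of (MvRel ι) u) = (u : SVB n)) :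
    (∀ x ∈ Upsv ι, ∀ β : VB n, ↑(ι β) * x * ↑(ι β)⁻¹ ∈ Upsv ι) ∧
    Function.Bijective (fun p : Mv ι × VB n => π p.1 * ↑(ι p.2)) ∧
    (∀ (ω ω' : Mv ι) (β β' : VB n), ∃ ω'' : Mv ι,
      π ω'' = ↑(ι β) * π ω' * ↑(ι β)⁻¹ ∧
      (π ω * ↑(ι β)) * (π ω' * ↑(ι β')) = π (ω * ω'') * ↑(ι (β * β'))) := by
  refine ⟨conj_mem ι, ⟨?_, ?_⟩, ?_⟩
  · -- injectivity
    intro p q h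
    have h2 := congrArg (Phi ι hι) h
    rw [Phi_prod ι hι π hπ, Phi_prod ι hι π hπ] at h2
    obtain ⟨h3, h4⟩ := SD.mk.injEq .. ▸ h2
    exact Prod.ext h3 h4
  · -- surjectivity
    intro x
    let S : Submonoid (SVB n) :=
      { carrier := Set.range (fun p : Mv ι × VB n => π p.1 * ↑(ι p.2))
        one_mem' := ⟨(1, 1), by simp⟩
        mul_mem' := by
          rintro _ _ ⟨p, rfl⟩ ⟨q, rfl⟩
          exact ⟨(p.1 * act ι p.2 q.1, p.2 * q.2), (prod_eq ι π hπ p.1 q.1 p.2 q.2).symm⟩ }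
    suffices hS : x ∈ S by exact hS
    have hgen : Set.range (PresentedMonoid.of (SVBRel n)) ⊆ S := by
      rintro _ ⟨y, rfl⟩
      cases y with
      | s i => exact ⟨(1, vσ i), by simp [(hι i).1, sσ]⟩
      | si i =>
          refine ⟨(1, (vσ i)⁻¹), ?_⟩
          show π 1 * ↑(ι (vσ i)⁻¹) = _
          rw [map_one, one_mul, map_inv, (hι i).2.1]
          rfl
      | r i => exact ⟨(1, vρ i), by simp [(hι i).2.2, sρ]⟩
      | t i =>
          refine ⟨(PresentedMonoid.of (MvRel ι) (upsτ ι i), 1), ?_⟩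
          show π _ * ↑(ι 1) = _
          rw [hπ, map_one, Units.val_one, mul_one]
          rfl
    have htop : x ∈ Submonoid.closure (Set.range (PresentedMonoid.of (SVBRel n))) := by
      rw [PresentedMonoid.closure_range_of]; trivial
    exact Submonoid.closure_le.mpr hgen htop
  · -- semidirect multiplication
    intro ω ω' β β'
    exact ⟨act ι β ω', pi_act ι π hπ β ω', prod_eq ι π hπ ω ω' β β'⟩

end SVBPaper
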